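/- arXiv:2205.12556 — 2 statements merged into one kernel-verified Lean document; each statement's English description precedes it below -/
import Mathlib

section
/- If λ ∈ ℕ₊^r satisfies λ_{ℓ+1} + λ_{ℓ+2} + ⋯ + λ_r ≥ n, then there exists a decreasing tuple α ∈ ℕ^{r−ℓ} with |α| = n such that λ̂(α) ≤ λ componentwise. (Covering step in the proof of the theorem on the ideals ℳ^{(n)}_{Ê_ℓ}.) -/
/-- A partition (decreasing tuple) of length ≤ r. -/
def IsPartition {r : ℕ} (l : Fin r → ℕ) : Prop :=
  ∀ i j : Fin r, i ≤ j → l j ≤ l i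

/-- For a decreasing tuple `α = (α_{ℓ+1},…,α_r) ∈ ℕ^{r-ℓ}`, the partition
`λ̂(α) = (α_{ℓ+1}^{(ℓ)}, α_{ℓ+1},…,α_r) ∈ ℕ₊^r` whose first ℓ entries all equal
the first entry of α and whose last r-ℓ entries are α itself. -/
def hatL (r l : ℕ) (h : l < r) (α : Fin (r - l) → ℕ) : Fin r → ℕ :=
  fun i =>
    if _ : (i : ℕ) < l then α ⟨0, Nat.sub_pos_of_lt h⟩
    else α ⟨(i : ℕ) - l, by have := i.isLt; omega⟩

/-- Covering step: if λ ∈ ℕ₊^r satisfies λ_{ℓ+1} + ⋯ + λ_r ≥ n, then there is a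
decreasing tuple α ∈ ℕ^{r-ℓ} with |α| = n and λ̂(α) ≤ λ componentwise. -/
theorem exists_hatL_le {r l n : ℕ} (hr : 1 ≤ r) (hl : l < r)
    (lam : Fin r → ℕ) (hlam : IsPartition lam)
    (hsum : n ≤ ∑ i ∈ Finset.univ.filter (fun i : Fin r => l ≤ (i : ℕ)), lam i) :
    ∃ α : Fin (r - l) → ℕ, IsPartition α ∧ (∑ i, α i = n) ∧ hatL r l hl α ≤ lam := by
  set m := r - l with hm
  set β : ℕ → ℕ := fun i => if h : i < m then lam ⟨l + i, by omega⟩ else 0 with hβ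
  set P : ℕ → ℕ := fun k => ∑ j ∈ Finset.range k, β j with hP
  have hβmono : ∀ i j : ℕ, i ≤ j → β j ≤ β i := by
    intro i j hij
    simp only [hβ]
    split_ifs with h1 h2 h2
    · exact hlam ⟨l + i, by omega⟩ ⟨l + j, by omega⟩ (by simp; omega)
    · omega
    · exact Nat.zero_le _
    · exact Nat.zero_le _
  have hPmono : Monotone P := by
    intro a b hab
    exact Finset.sum_le_sum_of_subset (Finset.range_subset_range.2 hab)
  -- key induction: partial sums of α equal min n (P k)
  have key : ∀ k : ℕ,
      ∑ j ∈ Finset.range k, min (β j) (n - min n (P j)) = min n (P k) := by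
    intro k
    induction k with
    | zero => simp [hP]
    | succ k ih =>
      rw [Finset.sum_range_succ, ih]
      have hPk : P (k + 1) = P k + β k := Finset.sum_range_succ _ _
      omega
  -- total sum P m equals the filtered sum
  have hPm : P m = ∑ i ∈ Finset.univ.filter (fun i : Fin r => l ≤ (i : ℕ)), lam i := by
    rw [hP]
    refine Finset.sum_bij' (fun j hj => (⟨l + j, by simp at hj; omega⟩ : Fin r))
      (fun i _ => (i : ℕ) - l) ?_ ?_ ?_ ?_ ?_
    · intro a ha; simp
    · intro a ha; simp at ha ⊢; omega
    · intro a ha; simp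
    · intro a ha; simp only [Finset.mem_filter] at ha; ext; simp; omega
    · intro a ha; simp at ha; simp [hβ, dif_pos ha]
  -- the candidate tuple
  refine ⟨fun i => min (β i) (n - min n (P i)), ?_, ?_, ?_⟩
  · intro i j hij
    exact le_min (le_trans (min_le_left _ _) (hβmono i j hij))
      (le_trans (min_le_right _ _) (by have := hPmono (show (i:ℕ) ≤ j from hij); omega))
  · rw [Fin.sum_univ_eq_sum_range (fun k => min (β k) (n - min n (P k))) m, key m]
    omega
  · intro i
    by_cases hi : (i : ℕ) < l
    · simp only [hatL, dif_pos hi]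
      refine le_trans (min_le_left _ _) ?_
      show β 0 ≤ lam i
      simp only [hβ]
      rw [dif_pos (show 0 < m by omega)]
      exact hlam i ⟨l + 0, by omega⟩ (by rw [Fin.le_def]; simp; omega)
    · simp only [hatL, dif_neg hi]
      refine le_trans (min_le_left _ _) ?_
      show β ((i : ℕ) - l) ≤ lam i
      have hlt : (i : ℕ) - l < m := by have := i.isLt; omega
      simp only [hβ]
      rw [dif_pos hlt]
      exact hlam i ⟨l + ((i : ℕ) - l), by omega⟩ (by rw [Fin.le_def]; simp; omega)
end

section
/- Let S = {λ ∈ ℕ₊^r : λ_{ℓ+1} + ⋯ + λ_r ≥ n}. Then S = {μ ∈ ℕ₊^r : λ̂(α) ≤ μ for some decreasing α ∈ ℕ^{r−ℓ} with |α| = n}, i.e. the finite set A = {λ̂(α) : α decreasing, |α| = n} is full for S; moreover A is minimal for S, i.e. for every α with |α| = n and every μ ∈ ℕ₊^r with μ < λ̂(α) one has μ_{ℓ+1}+⋯+μ_r < n. Hence A is the unique full and minimal subset of S. (Combinatorial content of the theorem: ℳ^{(n)}_{Ê_ℓ} = Σ_{|α|=n} J^{λ̂(α)} is the minimal finite decomposition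 into partition ideals.) -/
/-- `Λ` is full for `S`. -/
def IsFull {r : ℕ} (S Λ : Set (Fin r → ℕ)) : Prop :=
  Λ ⊆ S ∧ ∀ m : Fin r → ℕ, IsPartition m → (m ∈ S ↔ ∃ l ∈ Λ, l ≤ m)

/-- `A` is minimal for `S`. -/
def IsMinimalFor {r : ℕ} (S A : Set (Fin r → ℕ)) : Prop :=
  A ⊆ S ∧ ∀ a ∈ A, ∀ l : Fin r → ℕ, IsPartition l → l < a → l ∉ S


/-- extension of a `Fin r` tuple to `ℕ` by zero -/
def ext (r : ℕ) (m : Fin r → ℕ) : ℕ → ℕ := fun j => if h : j < r then m ⟨j, h⟩ else 0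

lemma ext_lt (r : ℕ) (m : Fin r → ℕ) (j : ℕ) (h : j < r) : ext r m j = m ⟨j, h⟩ := dif_pos h

lemma hatL_of_lt {r l : ℕ} (h : l < r) (α : Fin (r - l) → ℕ) (i : Fin r) (hi : (i : ℕ) < l) :
    hatL r l h α i = α ⟨0, Nat.sub_pos_of_lt h⟩ := dif_pos hi

lemma hatL_of_ge {r l : ℕ} (h : l < r) (α : Fin (r - l) → ℕ) (i : Fin r) (hi : l ≤ (i : ℕ)) :
    hatL r l h α i = α ⟨(i : ℕ) - l, by have := i.isLt; omega⟩ := dif_neg (by omega)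

lemma hatL_isPartition {r l : ℕ} (h : l < r) {α : Fin (r - l) → ℕ} (hα : IsPartition α) :
    IsPartition (hatL r l h α) := by
  intro i j hij
  have hij' : (i : ℕ) ≤ (j : ℕ) := hij
  unfold hatL
  split_ifs with h1 h2 h2
  · exact le_refl _
  · omega
  · exact hα _ _ (by simp [Fin.le_def])
  · exact hα _ _ (by simp [Fin.le_def]; omega)

lemma filter_range_eq_Ico (l r : ℕ) :
    (Finset.range r).filter (fun i => l ≤ i) = Finset.Ico l r := by
  ext x; simp [Finset.mem_filter, Finset.mem_range, Finset.mem_Ico]; omega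

lemma sum_filter_eq {r l : ℕ} (hl : l < r) (m : Fin r → ℕ) :
    ∑ i ∈ Finset.univ.filter (fun i : Fin r => l ≤ (i : ℕ)), m i
      = ∑ j ∈ Finset.range (r - l), ext r m (l + j) := by
  rw [Finset.sum_filter]
  have h1 : ∀ i : Fin r, (if l ≤ (i : ℕ) then m i else 0)
      = (fun j : ℕ => if l ≤ j then ext r m j else 0) (i : ℕ) := by
    intro i; simp [ext, i.isLt]
  rw [Finset.sum_congr rfl (fun i _ => h1 i),
    Fin.sum_univ_eq_sum_range (fun j : ℕ => if l ≤ j then ext r m j else 0) r,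
    ← Finset.sum_filter, filter_range_eq_Ico, Finset.sum_Ico_eq_sum_range]

lemma sum_univ_fin_sub {r l : ℕ} (hl : l < r) (α : Fin (r - l) → ℕ) :
    ∑ j, α j = ∑ j ∈ Finset.range (r - l), ext (r - l) α j := by
  calc ∑ j, α j = ∑ j : Fin (r - l), ext (r - l) α (j : ℕ) :=
        Finset.sum_congr rfl (fun j _ => by rw [ext_lt _ _ _ j.isLt])
    _ = _ := Fin.sum_univ_eq_sum_range _ _

lemma sum_hatL {r l : ℕ} (hl : l < r) (α : Fin (r - l) → ℕ) :
    ∑ i ∈ Finset.univ.filter (fun i : Fin r => l ≤ (i : ℕ)), hatL r l hl α i = ∑ j, α j := by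
  rw [sum_filter_eq hl, sum_univ_fin_sub hl]
  refine Finset.sum_congr rfl (fun j hj => ?_)
  have hj' := Finset.mem_range.mp hj
  rw [ext_lt _ _ _ (by omega : l + j < r), ext_lt _ _ _ hj',
    hatL_of_ge hl α _ (by simp)]
  congr 1
  simp

lemma shrink_sum (n : ℕ) (β : ℕ → ℕ) (k : ℕ) :
    ∑ i ∈ Finset.range k, min (β i) (n - ∑ j ∈ Finset.range i, β j)
      = min (∑ i ∈ Finset.range k, β i) n := by
  induction k with
  | zero => simp
  | succ k ih =>
    rw [Finset.sum_range_succ, Finset.sum_range_succ (f := β), ih]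
    omega

/-- Combinatorial content of the theorem on the ideals ℳ^{(n)}_{Ê_ℓ}:
for `S = {λ ∈ ℕ₊^r : λ_{ℓ+1} + ⋯ + λ_r ≥ n}` the finite set
`A = {λ̂(α) : α decreasing, |α| = n}` is full and minimal for `S`, and it is the
unique subset of `S` with these two properties. -/
theorem hatL_full_and_minimal {r l n : ℕ} (hr : 1 ≤ r) (hl : l < r)
    (S : Set (Fin r → ℕ))
    (hS : S = {m : Fin r → ℕ | IsPartition m ∧
      n ≤ ∑ i ∈ Finset.univ.filter (fun i : Fin r => l ≤ (i : ℕ)), m i})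
    (A : Set (Fin r → ℕ))
    (hA : A = hatL r l hl '' {α : Fin (r - l) → ℕ | IsPartition α ∧ ∑ i, α i = n}) :
    IsFull S A ∧ IsMinimalFor S A ∧ ∀ B : Set (Fin r → ℕ), IsFull S B → IsMinimalFor S B → B = A := by
  subst hS hA
  -- A ⊆ S
  have hAS : hatL r l hl '' {α : Fin (r - l) → ℕ | IsPartition α ∧ ∑ i, α i = n} ⊆
      {m : Fin r → ℕ | IsPartition m ∧
        n ≤ ∑ i ∈ Finset.univ.filter (fun i : Fin r => l ≤ (i : ℕ)), m i} := by
    rintro _ ⟨α, ⟨hα, hsum⟩, rfl⟩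
    exact ⟨hatL_isPartition hl hα, by rw [sum_hatL hl, hsum]⟩
  -- forward fullness
  have hfwd : ∀ m : Fin r → ℕ, IsPartition m →
      n ≤ ∑ i ∈ Finset.univ.filter (fun i : Fin r => l ≤ (i : ℕ)), m i →
      ∃ a ∈ hatL r l hl '' {α : Fin (r - l) → ℕ | IsPartition α ∧ ∑ i, α i = n}, a ≤ m := by
    intro m hm hn
    set β : ℕ → ℕ := fun j => ext r m (min (l + j) (r - 1)) with hβ
    have hβanti : ∀ i j : ℕ, i ≤ j → β j ≤ β i := by
      intro i j hij
      simp only [hβ]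
      rw [ext_lt _ _ _ (by omega : min (l + i) (r - 1) < r),
        ext_lt _ _ _ (by omega : min (l + j) (r - 1) < r)]
      exact hm _ _ (by simp [Fin.le_def]; omega)
    have hβsum : n ≤ ∑ j ∈ Finset.range (r - l), β j := by
      have h2 := sum_filter_eq hl m
      have heq : ∀ j ∈ Finset.range (r - l), β j = ext r m (l + j) := by
        intro j hj
        have hj' := Finset.mem_range.mp hj
        simp only [hβ]; congr 1; omega
      rw [Finset.sum_congr rfl heq]; omega
    set α : ℕ → ℕ := fun i => min (β i) (n - ∑ j ∈ Finset.range i, β j) with hα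
    have hαβ : ∀ i, α i ≤ β i := fun i => min_le_left _ _
    have hαanti : ∀ i j : ℕ, i ≤ j → α j ≤ α i := fun i j hij =>
      min_le_min (hβanti i j hij) (Nat.sub_le_sub_left
        (Finset.sum_le_sum_of_subset (Finset.range_subset_range.mpr hij)) n)
    have hαsum : ∑ i ∈ Finset.range (r - l), α i = n := by
      have h3 := shrink_sum n β (r - l)
      simp only [hα]; omega
    refine ⟨hatL r l hl (fun i : Fin (r - l) => α (i : ℕ)),
      ⟨(fun i : Fin (r - l) => α (i : ℕ)), ⟨fun i j hij => hαanti _ _ hij, ?_⟩, rfl⟩, ?_⟩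
    · rw [Fin.sum_univ_eq_sum_range α (r - l)]; exact hαsum
    · intro i
      by_cases hi : (i : ℕ) < l
      · rw [hatL_of_lt hl _ i hi]
        show α 0 ≤ m i
        have hβ0 : β 0 = m ⟨l, hl⟩ := by
          simp only [hβ]
          rw [show min (l + 0) (r - 1) = l by omega, ext_lt _ _ _ hl]
        calc α 0 ≤ β 0 := hαβ 0
          _ = m ⟨l, hl⟩ := hβ0
          _ ≤ m i := hm i ⟨l, hl⟩ (by simp [Fin.le_def]; omega)
      · rw [hatL_of_ge hl _ i (by omega)]
        show α ((i : ℕ) - l) ≤ m i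
        have hβi : β ((i : ℕ) - l) = m i := by
          simp only [hβ]
          rw [show min (l + ((i : ℕ) - l)) (r - 1) = (i : ℕ) by have := i.isLt; omega,
            ext_lt _ _ _ i.isLt]
        calc α ((i : ℕ) - l) ≤ β ((i : ℕ) - l) := hαβ _
          _ = m i := hβi
    -- minimality
  have hmin : ∀ a ∈ hatL r l hl '' {α : Fin (r - l) → ℕ | IsPartition α ∧ ∑ i, α i = n},
      ∀ μ : Fin r → ℕ, IsPartition μ → μ < a →
      μ ∉ {m : Fin r → ℕ | IsPartition m ∧
        n ≤ ∑ i ∈ Finset.univ.filter (fun i : Fin r => l ≤ (i : ℕ)), m i} := by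
    rintro _ ⟨α, ⟨hα, hsumα⟩, rfl⟩ μ hμ hlt ⟨_, hnμ⟩
    have hle : μ ≤ hatL r l hl α := hlt.le
    have hsum_a : ∑ i ∈ Finset.univ.filter (fun i : Fin r => l ≤ (i : ℕ)), hatL r l hl α i = n := by
      rw [sum_hatL hl, hsumα]
    have heqs : ∑ i ∈ Finset.univ.filter (fun i : Fin r => l ≤ (i : ℕ)), μ i
        = ∑ i ∈ Finset.univ.filter (fun i : Fin r => l ≤ (i : ℕ)), hatL r l hl α i :=
      le_antisymm (Finset.sum_le_sum fun i _ => hle i) (by omega)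
    have hpt : ∀ i ∈ Finset.univ.filter (fun i : Fin r => l ≤ (i : ℕ)),
        μ i = hatL r l hl α i :=
      (Finset.sum_eq_sum_iff_of_le fun i _ => hle i).mp heqs
    obtain ⟨i₀, hi₀ne⟩ := Function.ne_iff.mp hlt.ne
    have hi₀ : (i₀ : ℕ) < l := by
      by_contra hcon
      exact hi₀ne (hpt i₀ (Finset.mem_filter.mpr ⟨Finset.mem_univ _, by omega⟩))
    have hμl : μ ⟨l, hl⟩ = α ⟨0, Nat.sub_pos_of_lt hl⟩ := by
      rw [hpt ⟨l, hl⟩ (Finset.mem_filter.mpr ⟨Finset.mem_univ _, le_refl l⟩),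
        hatL_of_ge hl α _ le_rfl]
      congr 1
      exact Fin.ext (by simp)
    have hai₀ : hatL r l hl α i₀ = α ⟨0, Nat.sub_pos_of_lt hl⟩ := hatL_of_lt hl α i₀ hi₀
    have h1 : μ ⟨l, hl⟩ ≤ μ i₀ := hμ i₀ ⟨l, hl⟩ (by simp [Fin.le_def]; omega)
    have h2 : μ i₀ ≤ hatL r l hl α i₀ := hle i₀
    omega
  refine ⟨⟨hAS, fun m hm => ⟨fun hmS => hfwd m hm hmS.2,
    fun ⟨a, haA, ham⟩ => ⟨hm, le_trans (hAS haA).2 (Finset.sum_le_sum fun i _ => ham i)⟩⟩⟩,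
    ⟨hAS, hmin⟩, ?_⟩
  intro B ⟨hBS, hBfull⟩ ⟨_, hBmin⟩
  ext x
  constructor
  · intro hxB
    have hxS := hBS hxB
    obtain ⟨hx1, hx2⟩ := hxS
    obtain ⟨a, haA, hax⟩ := hfwd x hx1 hx2
    rcases eq_or_lt_of_le hax with heq | hltt
    · rwa [← heq]
    · exact absurd (hAS haA) (hBmin x hxB a (hAS haA).1 hltt)
  · intro hxA
    have hxS := hAS hxA
    obtain ⟨b, hbB, hbx⟩ := (hBfull x hxS.1).mp hxS
    rcases eq_or_lt_of_le hbx with heq | hltt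
    · rwa [← heq]
    · exact absurd (hBS hbB) (hmin x hxA b (hBS hbB).1 hltt)
end
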